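/- arXiv:2302.05446 — 4 statements merged into one kernel-verified Lean document; each statement's English description precedes it below -/
import Mathlib

section
/- Let T be a finite set of trajectories, X a finite set of terminal states, and end : T → X the map sending each trajectory to its terminal state, with every fiber end⁻¹(x) nonempty. Let {R_i}_{i=1}^∞ be a sequence of nonnegative reward functions R_i : X → ℝ such that R_i(x) → R(x) as i → ∞ for every terminal state x, where R : X → ℝ is nonnegative. Then for any flow F^R for R (i.e., any nonnegative function F^R : T → ℝ with ∑_{s ∈ end⁻¹(x)} F^R(s) = R(x) for all x ∈ X), there exists a sequence of functions {F^{R_i}}_{i=1}^∞ such that each F^{R_i} is a flow for R_i (nonnegative with ∑_{s ∈ end⁻¹(x)} F^{R_i}(s) = R_i(x) for all x) and F^{R_i}(s) → F^R(s) as i → ∞ for every trajectory s ∈ T. -/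
open Finset Filter Topology

/-- `F` is a flow for the reward `R` on the finite set of trajectories `T`
with terminal-state map `e : T → X`: it is nonnegative and the total flow
into each terminal state `x` equals `R x`. -/
def IsFlow {T X : Type*} [Fintype T] [DecidableEq X] (e : T → X) (R : X → ℝ)
    (F : T → ℝ) : Prop :=
  (∀ s, 0 ≤ F s) ∧ ∀ x, ∑ s ∈ Finset.univ.filter (fun s => e s = x), F s = R x

theorem flow_continuity {T X : Type*} [Fintype T] [Fintype X] [DecidableEq X]
    (e : T → X) (hfib : ∀ x : X, ∃ s : T, e s = x)
    (R : X → ℝ) (hR : ∀ x, 0 ≤ R x)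
    (Ri : ℕ → X → ℝ) (hRi : ∀ i x, 0 ≤ Ri i x)
    (hconv : ∀ x, Tendsto (fun i => Ri i x) atTop (𝓝 (R x)))
    (F : T → ℝ) (hF : IsFlow e R F) :
    ∃ Fi : ℕ → T → ℝ, (∀ i, IsFlow e (Ri i) (Fi i)) ∧
      ∀ s, Tendsto (fun i => Fi i s) atTop (𝓝 (F s)) := by
  classical
  obtain ⟨hF0, hFsum⟩ := hF
  set c : X → ℕ := fun x => (Finset.univ.filter (fun s => e s = x)).card with hc
  have hcpos : ∀ x, 0 < (c x : ℝ) := by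
    intro x
    have : (Finset.univ.filter (fun s => e s = x)).Nonempty := by
      obtain ⟨s, hs⟩ := hfib x
      exact ⟨s, by simp [hs]⟩
    exact_mod_cast Finset.card_pos.mpr this
  -- if R x = 0 then F s = 0 on the fiber
  have hFzero : ∀ s, R (e s) = 0 → F s = 0 := by
    intro s hRs
    have hsum := hFsum (e s)
    have := (Finset.sum_eq_zero_iff_of_nonneg (fun t _ => hF0 t)).mp
      (by rw [hsum, hRs])
    exact this s (by simp)
  refine ⟨fun i s => if 0 < R (e s) then F s * Ri i (e s) / R (e s)
    else Ri i (e s) / c (e s), ?_, ?_⟩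
  · intro i
    constructor
    · intro s
      dsimp only
      split_ifs with h
      · exact div_nonneg (mul_nonneg (hF0 s) (hRi i _)) (hR _)
      · exact div_nonneg (hRi i _) (hcpos _).le
    · intro x
      dsimp only
      by_cases h : 0 < R x
      · have hcong : ∀ s ∈ Finset.univ.filter (fun s => e s = x),
            (if 0 < R (e s) then F s * Ri i (e s) / R (e s) else Ri i (e s) / c (e s))
              = F s * Ri i x / R x := by
          intro s hs
          simp only [Finset.mem_filter] at hs
          rw [hs.2]
          simp [h]
        rw [Finset.sum_congr rfl hcong, ← Finset.sum_div, ← Finset.sum_mul, hFsum x]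
        field_simp
      · have hcong : ∀ s ∈ Finset.univ.filter (fun s => e s = x),
            (if 0 < R (e s) then F s * Ri i (e s) / R (e s) else Ri i (e s) / c (e s))
              = Ri i x / c x := by
          intro s hs
          simp only [Finset.mem_filter] at hs
          rw [hs.2]
          simp [h]
        rw [Finset.sum_congr rfl hcong, Finset.sum_const, nsmul_eq_mul,
          show ((Finset.univ.filter (fun s => e s = x)).card : ℝ) = (c x : ℝ) from rfl,
          mul_div_cancel₀ _ (hcpos x).ne']
  · intro s
    dsimp only
    by_cases h : 0 < R (e s)
    · simp only [h, if_pos]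
      have : Tendsto (fun i => F s * Ri i (e s) / R (e s)) atTop
          (𝓝 (F s * R (e s) / R (e s))) :=
        (((hconv (e s)).const_mul (F s)).div_const _)
      rwa [mul_div_assoc, div_self h.ne', mul_one] at this
    · simp only [h, if_neg, not_false_iff]
      have hRz : R (e s) = 0 := le_antisymm (not_lt.mp h) (hR _)
      rw [hFzero s hRz]
      have : Tendsto (fun i => Ri i (e s) / (c (e s) : ℝ)) atTop
          (𝓝 (R (e s) / c (e s))) := (hconv (e s)).div_const _
      rwa [hRz, zero_div] at this
end

section
/- Let T be a finite set of trajectories, X a finite set of terminal states, end : T → X with every fiber nonempty, F a flow for a nonnegative reward R : X → ℝ, and {R_i}_{i=1}^∞ nonnegative rewards with R_i(x) → R(x) for every x ∈ X. Define F_i(s) := F(s) · R_i(end(s)) / R(end(s)) if R(end(s)) > 0, and F_i(s) := R_i(end(s)) / |end⁻¹(end(s))| otherwise. Then for every trajectory s ∈ T, F_i(s) → F(s) as i → ∞. In particular, if R(end(s)) = 0 then F(s) = 0 and F_i(s) = R_i(end(s))/|end⁻¹(end(s))| → 0. -/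
open Finset Filter Topology

theorem reweighted_flow_converges {T X : Type*} [Fintype T] [Fintype X] [DecidableEq X]
    (e : T → X) (hfib : ∀ x : X, ∃ s : T, e s = x)
    (R : X → ℝ) (hR : ∀ x, 0 ≤ R x)
    (F : T → ℝ) (hF : IsFlow e R F)
    (Ri : ℕ → X → ℝ) (hRi : ∀ i x, 0 ≤ Ri i x)
    (hconv : ∀ x, Tendsto (fun i => Ri i x) atTop (𝓝 (R x)))
    (Fi : ℕ → T → ℝ)
    (hFidef : ∀ i s, Fi i s =
      if 0 < R (e s) then F s * Ri i (e s) / R (e s)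
      else Ri i (e s) / (Finset.univ.filter (fun t => e t = e s)).card) :
    (∀ s, Tendsto (fun i => Fi i s) atTop (𝓝 (F s))) ∧
    (∀ s, R (e s) = 0 →
      F s = 0 ∧
      (∀ i, Fi i s = Ri i (e s) / (Finset.univ.filter (fun t => e t = e s)).card) ∧
      Tendsto (fun i => Fi i s) atTop (𝓝 0)) := by
  obtain ⟨hFnn, hsum⟩ := hF
  have hFzero : ∀ s, R (e s) = 0 → F s = 0 := by
    intro s hs
    have hmem : s ∈ Finset.univ.filter (fun t => e t = e s) := by simp
    have h0 : ∑ t ∈ Finset.univ.filter (fun t => e t = e s), F t = 0 := by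
      rw [hsum (e s), hs]
    have := Finset.sum_eq_zero_iff_of_nonneg (fun t _ => hFnn t) |>.mp h0
    exact this s hmem
  have hzero : ∀ s, R (e s) = 0 →
      F s = 0 ∧
      (∀ i, Fi i s = Ri i (e s) / (Finset.univ.filter (fun t => e t = e s)).card) ∧
      Tendsto (fun i => Fi i s) atTop (𝓝 0) := by
    intro s hs
    have hF0 := hFzero s hs
    have hform : ∀ i, Fi i s = Ri i (e s) / (Finset.univ.filter (fun t => e t = e s)).card := by
      intro i
      rw [hFidef i s, if_neg (by rw [hs]; exact lt_irrefl 0)]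
    refine ⟨hF0, hform, ?_⟩
    have : Tendsto (fun i => Ri i (e s) / (Finset.univ.filter (fun t => e t = e s)).card)
        atTop (𝓝 (R (e s) / (Finset.univ.filter (fun t => e t = e s)).card)) :=
      (hconv (e s)).div_const _
    rw [hs, zero_div] at this
    exact this.congr fun i => (hform i).symm
  refine ⟨?_, hzero⟩
  intro s
  rcases eq_or_lt_of_le (hR (e s)) with h0 | hpos
  · have := (hzero s h0.symm).2.2
    rw [← hFzero s h0.symm] at this
    exact this
  · have hform : ∀ i, Fi i s = F s * Ri i (e s) / R (e s) := fun i => by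
      rw [hFidef i s, if_pos hpos]
    have : Tendsto (fun i => F s * Ri i (e s) / R (e s)) atTop
        (𝓝 (F s * R (e s) / R (e s))) := (((hconv (e s)).const_mul (F s)).div_const _)
    rw [mul_div_assoc, div_self hpos.ne', mul_one] at this
    exact this.congr fun i => (hform i).symm
end

section
/- Let T be a finite set of trajectories, X a finite set of terminal states, end : T → X with every fiber nonempty, U : X → ℝ a function with U(x) ≤ m for all x (m a fixed real number), and for σ > 0 define the temperature-conditioned reward R_σ(x) := exp((U(x) − m)/σ). Fix σ_0 > 0 and let F be a flow for R_{σ_0}. Then for every ε > 0 there exists δ > 0 such that for all σ ∈ (σ_0, σ_0 + δ), the function F_σ(s) := F(s) · R_σ(end(s)) / R_{σ_0}(end(s)) is a flow for R_σ and satisfies F_σ(s) − F(s) < ε for every trajectory s ∈ T. -/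
/-!
Reweighting a flow by `R_σ / R_σ₀` multiplies the flow into each terminal state `x` by the constant
`R_σ x / R_σ₀ x`, so it turns a flow for `R_σ₀` into a flow for `R_σ`, for every `σ`. The ratio is
continuous in `σ` at `σ₀ ≠ 0` and equals `1` there, so each reweighted value tends to `F s`; since
there are finitely many trajectories, one neighbourhood of `σ₀` serves all of them.
-/

open Finset Filter Topology

theorem IsFlow.reweight {T X : Type*} [Fintype T] [DecidableEq X] {e : T → X} {R R' : X → ℝ}
    {F : T → ℝ} (hF : IsFlow e R F) (hR : ∀ x, 0 < R x) (hR' : ∀ x, 0 ≤ R' x) :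
    IsFlow e R' (fun s => F s * R' (e s) / R (e s)) := by
  obtain ⟨hF_nonneg, hF_sum⟩ := hF
  refine ⟨fun s => div_nonneg (mul_nonneg (hF_nonneg s) (hR' _)) (hR _).le, fun x => ?_⟩
  have hfiber : ∀ s ∈ univ.filter (fun s => e s = x),
      F s * R' (e s) / R (e s) = F s * (R' x / R x) := by
    intro s hs
    rw [(mem_filter.1 hs).2, mul_div_assoc]
  rw [sum_congr rfl hfiber, ← sum_mul, hF_sum x, mul_div_cancel₀ _ (hR x).ne']

theorem exists_pos_forall_lt_lt_of_eventually_nhds {P : ℝ → Prop} {σ₀ : ℝ}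
    (hP : ∀ᶠ σ in 𝓝 σ₀, P σ) : ∃ δ > 0, ∀ σ, σ₀ < σ → σ < σ₀ + δ → P σ := by
  obtain ⟨δ, hδ, hball⟩ := Metric.eventually_nhds_iff.1 hP
  refine ⟨δ, hδ, fun σ hlo hhi => hball ?_⟩
  rw [Real.dist_eq, abs_of_pos (sub_pos.2 hlo)]
  linarith

theorem temperature_flow_neighborhood_general {T X : Type*} [Fintype T] [DecidableEq X]
    (e : T → X)
    (U : X → ℝ) (m : ℝ)
    (σ₀ : ℝ) (hσ₀ : 0 < σ₀)
    (F : T → ℝ) (hF : IsFlow e (fun x => Real.exp ((U x - m) / σ₀)) F) :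
    ∀ ε > (0 : ℝ), ∃ δ > (0 : ℝ), ∀ σ : ℝ, σ₀ < σ → σ < σ₀ + δ →
      IsFlow e (fun x => Real.exp ((U x - m) / σ))
        (fun s => F s * Real.exp ((U (e s) - m) / σ) / Real.exp ((U (e s) - m) / σ₀)) ∧
      ∀ s, F s * Real.exp ((U (e s) - m) / σ) / Real.exp ((U (e s) - m) / σ₀) - F s < ε := by
  intro ε hε
  have hclose : ∀ᶠ σ in 𝓝 σ₀, ∀ s,
      F s * Real.exp ((U (e s) - m) / σ) / Real.exp ((U (e s) - m) / σ₀) < F s + ε := by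
    refine eventually_all.2 fun s => ContinuousAt.eventually_lt ?_ continuousAt_const ?_
    · fun_prop (disch := exact hσ₀.ne')
    · rw [mul_div_cancel_right₀ _ (Real.exp_pos _).ne']
      linarith
  obtain ⟨δ, hδ, hδclose⟩ := exists_pos_forall_lt_lt_of_eventually_nhds hclose
  refine ⟨δ, hδ, fun σ hlo hhi => ⟨?_, fun s => sub_lt_iff_lt_add'.2 (hδclose σ hlo hhi s)⟩⟩
  exact hF.reweight (fun _ => Real.exp_pos _) (fun _ => (Real.exp_pos _).le)

theorem temperature_flow_neighborhood {T X : Type*} [Fintype T] [Fintype X] [DecidableEq X]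
    (e : T → X) (hfib : ∀ x : X, ∃ s : T, e s = x)
    (U : X → ℝ) (m : ℝ) (hU : ∀ x, U x ≤ m)
    (σ₀ : ℝ) (hσ₀ : 0 < σ₀)
    (F : T → ℝ) (hF : IsFlow e (fun x => Real.exp ((U x - m) / σ₀)) F) :
    ∀ ε > (0 : ℝ), ∃ δ > (0 : ℝ), ∀ σ : ℝ, σ₀ < σ → σ < σ₀ + δ →
      IsFlow e (fun x => Real.exp ((U x - m) / σ))
        (fun s => F s * Real.exp ((U (e s) - m) / σ) / Real.exp ((U (e s) - m) / σ₀)) ∧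
      ∀ s, F s * Real.exp ((U (e s) - m) / σ) / Real.exp ((U (e s) - m) / σ₀) - F s < ε :=
  temperature_flow_neighborhood_general e U m σ₀ hσ₀ F hF
end

section
/- Let T be a finite set of trajectories, X a finite set of terminal states, end : T → X with every fiber nonempty, U : X → ℝ with U(x) ≤ m for all x (m a fixed real), and R_σ(x) := exp((U(x) − m)/σ) for σ > 0. Let σ_i be a strictly decreasing sequence with σ_i → σ_0 > 0, and let F be a flow for R_{σ_0}. Define F_i(s) := F(s) · R_{σ_i}(end(s)) / R_{σ_0}(end(s)). Then each F_i is a flow for R_{σ_i}, and for every trajectory s ∈ T the sequence i ↦ F_i(s) is monotonically nonincreasing, satisfies F_i(s) ≥ F(s), and converges to F(s) as i → ∞. -/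
open Finset Filter Topology

theorem temperature_flow_monotone_convergence {T X : Type*}
    [Fintype T] [Fintype X] [DecidableEq X]
    (e : T → X) (hfib : ∀ x : X, ∃ s : T, e s = x)
    (U : X → ℝ) (m : ℝ) (hU : ∀ x, U x ≤ m)
    (σ : ℕ → ℝ) (σ₀ : ℝ) (hσ₀ : 0 < σ₀)
    (hanti : StrictAnti σ) (hlim : Tendsto σ atTop (𝓝 σ₀))
    (F : T → ℝ) (hF : IsFlow e (fun x => Real.exp ((U x - m) / σ₀)) F)
    (Fi : ℕ → T → ℝ)
    (hFidef : ∀ i s, Fi i s =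
      F s * Real.exp ((U (e s) - m) / σ i) / Real.exp ((U (e s) - m) / σ₀)) :
    (∀ i, IsFlow e (fun x => Real.exp ((U x - m) / σ i)) (Fi i)) ∧
    ∀ s, Antitone (fun i => Fi i s) ∧ (∀ i, F s ≤ Fi i s) ∧
      Tendsto (fun i => Fi i s) atTop (𝓝 (F s)) := by
  have hσle : ∀ i, σ₀ ≤ σ i := by
    intro i
    refine le_of_tendsto hlim ?_
    filter_upwards [eventually_ge_atTop i] with j hj
    exact hanti.antitone hj
  have hσpos : ∀ i, 0 < σ i := fun i => lt_of_lt_of_le hσ₀ (hσle i)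
  have hexppos : ∀ x (t : ℝ), (0:ℝ) < Real.exp ((U x - m) / t) := fun x t => Real.exp_pos _
  -- key monotonicity of the exponent
  have hdivle : ∀ x {a b : ℝ}, 0 < a → a ≤ b → (U x - m) / a ≤ (U x - m) / b := by
    intro x a b ha hab
    have hU' : U x - m ≤ 0 := sub_nonpos.mpr (hU x)
    rw [div_le_div_iff₀ ha (ha.trans_le hab)]
    nlinarith
  constructor
  · intro i
    constructor
    · intro s
      rw [hFidef i s]
      have := hF.1 s
      positivity
    · intro x
      have : ∀ s ∈ Finset.univ.filter (fun s => e s = x), Fi i s =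
          F s * (Real.exp ((U x - m) / σ i) / Real.exp ((U x - m) / σ₀)) := by
        intro s hs
        rw [Finset.mem_filter] at hs
        rw [hFidef i s, hs.2, mul_div_assoc]
      rw [Finset.sum_congr rfl this, ← Finset.sum_mul, hF.2 x]
      field_simp
  · intro s
    set c := U (e s) - m with hc
    have hF0 : 0 ≤ F s := hF.1 s
    have key : ∀ i, Fi i s = F s * (Real.exp (c / σ i) / Real.exp (c / σ₀)) := by
      intro i; rw [hFidef i s, mul_div_assoc]
    have hge : ∀ i, F s ≤ Fi i s := by
      intro i
      rw [key i]
      have h1 : Real.exp (c / σ₀) ≤ Real.exp (c / σ i) :=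
        Real.exp_le_exp.mpr (hdivle (e s) hσ₀ (hσle i))
      have : (1:ℝ) ≤ Real.exp (c / σ i) / Real.exp (c / σ₀) :=
        (one_le_div (hexppos (e s) σ₀)).mpr h1
      nlinarith
    refine ⟨?_, hge, ?_⟩
    · intro i j hij
      show Fi j s ≤ Fi i s
      rw [key i, key j]
      have h1 : Real.exp (c / σ j) ≤ Real.exp (c / σ i) :=
        Real.exp_le_exp.mpr (hdivle (e s) (hσpos j) (hanti.antitone hij))
      gcongr
    · have h1 : Tendsto (fun i => Real.exp (c / σ i)) atTop (𝓝 (Real.exp (c / σ₀))) :=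
        (Real.continuous_exp.tendsto _).comp
          ((tendsto_const_nhds.div hlim (ne_of_gt hσ₀)))
      have h2 : Tendsto (fun i => F s * (Real.exp (c / σ i) / Real.exp (c / σ₀))) atTop
          (𝓝 (F s * (Real.exp (c / σ₀) / Real.exp (c / σ₀)))) :=
        tendsto_const_nhds.mul (h1.div tendsto_const_nhds (ne_of_gt (hexppos (e s) σ₀)))
      rw [div_self (ne_of_gt (hexppos (e s) σ₀)), mul_one] at h2
      convert h2 using 2
      exact key _
end
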